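/- arXiv:2410.06281 — 2 statements merged into one kernel-verified Lean document; each statement's English description precedes it below -/
import Mathlib

section
/- Sequential Net Benefit statistics satisfy the independent increment property: with nested samples, letting ΔU_k = U_{wk} − U_{lk} be the Net Benefit at stage k (difference of the win and loss U-statistics over the first m_k treatment and n_k control subjects), for stages k < s one has Cov(ΔU_k, ΔU_s) = Var(ΔU_s), and hence the standardized statistics D_k = (ΔU_k − Δτ)/√Var(ΔU_k) satisfy Cov(D_k, D_s) = √(Var(ΔU_s)/Var(ΔU_k)). -/
open MeasureTheory ProbabilityTheory Finset

/-!
With `ψ = φw - φl` and `T i j = ψ (X i) (Y j)`, `ΔU` is the mean of the array `T` over the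
rectangle `[0, m) × [0, n)`. Because the samples are i.i.d., `Cov(T i j, T a b)` depends only on
whether `i = a` and whether `j = b`; swapping indices therefore shows that `Cov(T i j, ΔU_s)` is the
same for every cell `(i, j)` of the larger rectangle. Averaging over the smaller and over the larger
rectangle gives `Cov(ΔU_k, ΔU_s) = Cov(T 0 0, ΔU_s) = Cov(ΔU_s, ΔU_s) = Var(ΔU_s)`, and the
formula for the standardized statistics follows by bilinearity of the covariance.
-/

lemma setOf_swap_zero_apply_ne_subset_range {i m : ℕ} (hi : i < m) :
    {a | Equiv.swap 0 i a ≠ a} ⊆ (range m : Set ℕ) := by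
  intro a ha
  by_contra h
  have hia : i < a := hi.trans_le (not_lt.1 (by simpa using h))
  exact ha (Equiv.swap_apply_of_ne_of_ne (by omega) (by omega))

theorem sum_range_sum_range_eq_of_iff {M : Type*} [AddCommMonoid M] {c : ℕ → ℕ → ℕ → ℕ → M}
    (hc : ∀ i j a b i' j' a' b', (i = a ↔ i' = a') → (j = b ↔ j' = b') →
      c i j a b = c i' j' a' b')
    {m n i j : ℕ} (hi : i < m) (hj : j < n) :
    ∑ a ∈ range m, ∑ b ∈ range n, c i j a b = ∑ a ∈ range m, ∑ b ∈ range n, c 0 0 a b := by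
  set σ := Equiv.swap 0 i
  set τ := Equiv.swap 0 j
  calc ∑ a ∈ range m, ∑ b ∈ range n, c i j a b
      = ∑ a ∈ range m, ∑ b ∈ range n, c 0 0 (σ a) (τ b) := by
        refine sum_congr rfl fun a _ => sum_congr rfl fun b _ => hc _ _ _ _ _ _ _ _ ?_ ?_
        · simpa [σ] using (σ.injective.eq_iff (a := i) (b := a)).symm
        · simpa [τ] using (τ.injective.eq_iff (a := j) (b := b)).symm
    _ = ∑ a ∈ range m, ∑ b ∈ range n, c 0 0 a b := by
        rw [σ.sum_comp _ (fun a => ∑ b ∈ range n, c 0 0 a (τ b))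
          (setOf_swap_zero_apply_ne_subset_range hi)]
        exact sum_congr rfl fun a _ =>
          τ.sum_comp _ (c 0 0 a) (setOf_swap_zero_apply_ne_subset_range hj)

section

variable {Ω : Type*} [MeasurableSpace Ω] {μ : Measure Ω}

theorem covariance_standardized_of_covariance_eq_variance [IsProbabilityMeasure μ]
    {f g : Ω → ℝ} (hf : MemLp f 2 μ) (hg : MemLp g 2 μ) (hfg : cov[f, g; μ] = Var[g; μ])
    (c d : ℝ) :
    cov[fun ω => (f ω - c) / √Var[f; μ], fun ω => (g ω - d) / √Var[g; μ]; μ]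
      = √(Var[g; μ] / Var[f; μ]) := by
  rw [covariance_fun_div_left, covariance_fun_div_right,
    covariance_sub_const_left (hf.integrable one_le_two),
    covariance_sub_const_right (hg.integrable one_le_two), hfg, Real.div_sqrt,
    Real.sqrt_div' _ (variance_nonneg f μ)]

lemma MeasureTheory.MemLp.sub_const_div [IsFiniteMeasure μ] {p : ENNReal} {f : Ω → ℝ}
    (hf : MemLp f p μ) (c s : ℝ) :
    MemLp (fun ω => (f ω - c) / s) p μ := by
  simpa only [div_eq_inv_mul, Pi.sub_apply] using (hf.sub (memLp_const c)).const_mul s⁻¹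

lemma ProbabilityTheory.IdentDistrib.covariance_comp_eq {Ω' E : Type*} [MeasurableSpace Ω']
    [MeasurableSpace E] {ν : Measure Ω'} {f : Ω → E} {g : Ω' → E}
    (h : IdentDistrib f g μ ν) {u v : E → ℝ} (hu : Measurable u) (hv : Measurable v) :
    cov[fun ω => u (f ω), fun ω => v (f ω); μ] = cov[fun ω => u (g ω), fun ω => v (g ω); ν] := by
  rw [← covariance_map_fun hu.aestronglyMeasurable hv.aestronglyMeasurable h.aemeasurable_fst,
    ← covariance_map_fun hu.aestronglyMeasurable hv.aestronglyMeasurable h.aemeasurable_snd,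
    h.map_eq]

section RectMean

noncomputable def rectMean (T : ℕ → ℕ → Ω → ℝ) (m n : ℕ) : Ω → ℝ :=
  fun ω => (1 / (m * n : ℝ)) * ∑ i ∈ range m, ∑ j ∈ range n, T i j ω

variable {T : ℕ → ℕ → Ω → ℝ}

lemma memLp_rectMean (hT : ∀ i j, MemLp (T i j) 2 μ) (m n : ℕ) :
    MemLp (rectMean T m n) 2 μ :=
  (memLp_finsetSum _ fun i _ => memLp_finsetSum _ fun j _ => hT i j).const_mul _

lemma covariance_rectMean_left [IsProbabilityMeasure μ] (hT : ∀ i j, MemLp (T i j) 2 μ)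
    {m n : ℕ} (hm : 1 ≤ m) (hn : 1 ≤ n) {Z : Ω → ℝ} (hZ : MemLp Z 2 μ) {κ : ℝ}
    (h : ∀ i < m, ∀ j < n, cov[T i j, Z; μ] = κ) :
    cov[rectMean T m n, Z; μ] = κ := by
  have hsum : ∑ i ∈ range m, ∑ j ∈ range n, cov[T i j, Z; μ] = m * n * κ := by
    rw [sum_congr rfl fun i hi => sum_congr rfl fun j hj =>
      h i (mem_range.1 hi) j (mem_range.1 hj)]
    simp [mul_assoc]
  have hmn : (m * n : ℝ) ≠ 0 := by positivity
  unfold rectMean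
  rw [covariance_const_mul_left,
    covariance_fun_sum_left' (X := fun i ω => ∑ j ∈ range n, T i j ω)
      (fun i _ => memLp_finsetSum _ fun j _ => hT i j) hZ]
  simp_rw [covariance_fun_sum_left' (fun j _ => hT _ j) hZ]
  rw [hsum]
  field_simp

lemma covariance_rectMean_right [IsProbabilityMeasure μ] (hT : ∀ i j, MemLp (T i j) 2 μ)
    {Z : Ω → ℝ} (hZ : MemLp Z 2 μ) (m n : ℕ) :
    cov[Z, rectMean T m n; μ]
      = 1 / (m * n : ℝ) * ∑ a ∈ range m, ∑ b ∈ range n, cov[Z, T a b; μ] := by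
  unfold rectMean
  rw [covariance_const_mul_right,
    covariance_fun_sum_right' (X := fun a ω => ∑ b ∈ range n, T a b ω)
      (fun a _ => memLp_finsetSum _ fun b _ => hT a b) hZ]
  simp_rw [covariance_fun_sum_right' (fun b _ => hT _ b) hZ]

theorem covariance_rectMean_rectMean [IsProbabilityMeasure μ] (hT : ∀ i j, MemLp (T i j) 2 μ)
    (hcov : ∀ i j a b i' j' a' b', (i = a ↔ i' = a') → (j = b ↔ j' = b') →
      cov[T i j, T a b; μ] = cov[T i' j', T a' b'; μ])
    {m n M N : ℕ} (hm : 1 ≤ m) (hn : 1 ≤ n) (hmM : m ≤ M) (hnN : n ≤ N) :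
    cov[rectMean T m n, rectMean T M N; μ] = Var[rectMean T M N; μ] := by
  have hrow : ∀ i < M, ∀ j < N,
      cov[T i j, rectMean T M N; μ] = cov[T 0 0, rectMean T M N; μ] := fun i hi j hj => by
    rw [covariance_rectMean_right hT (hT i j), covariance_rectMean_right hT (hT 0 0),
      sum_range_sum_range_eq_of_iff (c := fun i j a b => cov[T i j, T a b; μ]) hcov hi hj]
  have hUs := memLp_rectMean hT M N
  rw [← covariance_self hUs.aestronglyMeasurable.aemeasurable,
    covariance_rectMean_left hT hm hn hUs
      fun i hi j hj => hrow i (hi.trans_le hmM) j (hj.trans_le hnN),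
    covariance_rectMean_left hT (hm.trans hmM) (hn.trans hnN) hUs hrow]

end RectMean

section TwoSamples

variable {ι κ α β : Type*} [MeasurableSpace α] [MeasurableSpace β]

lemma ProbabilityTheory.iIndepFun.of_sumElim_left [Nonempty α] {X : ι → Ω → α}
    {Y : κ → Ω → β}
    (h : iIndepFun (Sum.elim (fun i ω => Sum.inl (X i ω)) (fun j ω => Sum.inr (Y j ω)) :
      ι ⊕ κ → Ω → α ⊕ β) μ) :
    iIndepFun X μ :=
  (h.precomp Sum.inl_injective).comp (fun _ => Sum.elim id fun _ => Classical.arbitrary α)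
    fun _ => measurable_id.sumElim measurable_const

lemma ProbabilityTheory.iIndepFun.of_sumElim_right [Nonempty β] {X : ι → Ω → α}
    {Y : κ → Ω → β}
    (h : iIndepFun (Sum.elim (fun i ω => Sum.inl (X i ω)) (fun j ω => Sum.inr (Y j ω)) :
      ι ⊕ κ → Ω → α ⊕ β) μ) :
    iIndepFun Y μ :=
  (h.precomp Sum.inr_injective).comp (fun _ => Sum.elim (fun _ => Classical.arbitrary β) id)
    fun _ => measurable_const.sumElim measurable_id

lemma ProbabilityTheory.iIndepFun.indepFun_prodMk_prodMk_of_sumElim [Nonempty α] [Nonempty β]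
    {X : ι → Ω → α} {Y : κ → Ω → β}
    (h : iIndepFun (Sum.elim (fun i ω => Sum.inl (X i ω)) (fun j ω => Sum.inr (Y j ω)) :
      ι ⊕ κ → Ω → α ⊕ β) μ)
    (hX : ∀ i, AEMeasurable (X i) μ) (hY : ∀ j, AEMeasurable (Y j) μ) (i a : ι) (j b : κ) :
    IndepFun (fun ω => (X i ω, X a ω)) (fun ω => (Y j ω, Y b ω)) μ := by
  have hZ : ∀ k, AEMeasurable ((Sum.elim (fun i ω => Sum.inl (X i ω))
      (fun j ω => Sum.inr (Y j ω)) : ι ⊕ κ → Ω → α ⊕ β) k) μ := by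
    rintro (i | j)
    · exact measurable_inl.comp_aemeasurable (hX i)
    · exact measurable_inr.comp_aemeasurable (hY j)
  have hr : Measurable (Sum.elim id fun _ => Classical.arbitrary α : α ⊕ β → α) :=
    measurable_id.sumElim measurable_const
  have hs : Measurable (Sum.elim (fun _ => Classical.arbitrary β) id : α ⊕ β → β) :=
    measurable_const.sumElim measurable_id
  exact (h.indepFun_prodMk_prodMk₀ hZ (.inl i) (.inl a) (.inr j) (.inr b) Sum.inl_ne_inr
    Sum.inl_ne_inr Sum.inl_ne_inr Sum.inl_ne_inr).comp (hr.prodMap hr) (hs.prodMap hs)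

variable [IsFiniteMeasure μ] {X : ℕ → Ω → α} {Y : ℕ → Ω → β}

theorem ProbabilityTheory.iIndepFun.identDistrib_prodMk_of_iff (hX : iIndepFun X μ)
    (hXid : ∀ i, IdentDistrib (X i) (X 0) μ μ) {i a i' a' : ℕ} (h : i = a ↔ i' = a') :
    IdentDistrib (fun ω => (X i ω, X a ω)) (fun ω => (X i' ω, X a' ω)) μ μ := by
  have hid : ∀ k l, IdentDistrib (X k) (X l) μ μ := fun k l => (hXid k).trans (hXid l).symm
  by_cases hia : i = a
  · obtain rfl := hia
    obtain rfl := h.1 rfl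
    exact (hid i i').comp (measurable_id.prodMk measurable_id)
  · exact (hid i i').prodMk (hid a a') (hX.indepFun hia) (hX.indepFun (mt h.2 hia))

lemma memLp_kernel
    (hXY : ∀ i a j b, IndepFun (fun ω => (X i ω, X a ω)) (fun ω => (Y j ω, Y b ω)) μ)
    (hXid : ∀ i, IdentDistrib (X i) (X 0) μ μ) (hYid : ∀ j, IdentDistrib (Y j) (Y 0) μ μ)
    {ψ : α → β → ℝ} (hψ : Measurable (Function.uncurry ψ))
    (hψ2 : MemLp (fun ω => ψ (X 0 ω) (Y 0 ω)) 2 μ) (i j : ℕ) :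
    MemLp (fun ω => ψ (X i ω) (Y j ω)) 2 μ :=
  (((hXid i).prodMk (hYid j) ((hXY i i j j).comp measurable_fst measurable_fst)
    ((hXY 0 0 0 0).comp measurable_fst measurable_fst)).comp hψ).symm.memLp_snd hψ2

theorem covariance_kernel_eq_of_iff (hX : iIndepFun X μ) (hY : iIndepFun Y μ)
    (hXY : ∀ i a j b, IndepFun (fun ω => (X i ω, X a ω)) (fun ω => (Y j ω, Y b ω)) μ)
    (hXid : ∀ i, IdentDistrib (X i) (X 0) μ μ) (hYid : ∀ j, IdentDistrib (Y j) (Y 0) μ μ)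
    {ψ : α → β → ℝ} (hψ : Measurable (Function.uncurry ψ)) (i j a b i' j' a' b' : ℕ)
    (hia : i = a ↔ i' = a') (hjb : j = b ↔ j' = b') :
    cov[fun ω => ψ (X i ω) (Y j ω), fun ω => ψ (X a ω) (Y b ω); μ]
      = cov[fun ω => ψ (X i' ω) (Y j' ω), fun ω => ψ (X a' ω) (Y b' ω); μ] :=
  ((hX.identDistrib_prodMk_of_iff hXid hia).prodMk (hY.identDistrib_prodMk_of_iff hYid hjb)
    (hXY i a j b) (hXY i' a' j' b')).covariance_comp_eq
    (u := fun q => ψ q.1.1 q.2.1) (v := fun q => ψ q.1.2 q.2.2)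
    (hψ.comp (measurable_fst.fst.prodMk measurable_snd.fst))
    (hψ.comp (measurable_fst.snd.prodMk measurable_snd.snd))

end TwoSamples

end

theorem stmt_6_general {Ω α β : Type*} [MeasurableSpace Ω] [MeasurableSpace α] [MeasurableSpace β]
    (μ : Measure Ω) [IsProbabilityMeasure μ]
    (X : ℕ → Ω → α) (Y : ℕ → Ω → β)
    (hXid : ∀ i, IdentDistrib (X i) (X 0) μ μ)
    (hYid : ∀ j, IdentDistrib (Y j) (Y 0) μ μ)
    (hindep : iIndepFun
      (Sum.elim (fun i ω => Sum.inl (X i ω)) (fun j ω => Sum.inr (Y j ω)) : ℕ ⊕ ℕ → Ω → α ⊕ β) μ)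
    (φw φl : α → β → ℝ)
    (hφw : Measurable (Function.uncurry φw)) (hφl : Measurable (Function.uncurry φl))
    (hL2w : MemLp (fun ω => φw (X 0 ω) (Y 0 ω)) 2 μ)
    (hL2l : MemLp (fun ω => φl (X 0 ω) (Y 0 ω)) 2 μ)
    (τw τl : ℝ)
    (mk nk ms ns : ℕ) (hmk : 1 ≤ mk) (hnk : 1 ≤ nk) (hmks : mk ≤ ms) (hnks : nk ≤ ns)
    (ΔUk ΔUs : Ω → ℝ)
    (hΔUk : ΔUk = fun ω =>
      (1 / (mk * nk : ℝ)) * ∑ i ∈ range mk, ∑ j ∈ range nk, φw (X i ω) (Y j ω)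
      - (1 / (mk * nk : ℝ)) * ∑ i ∈ range mk, ∑ j ∈ range nk, φl (X i ω) (Y j ω))
    (hΔUs : ΔUs = fun ω =>
      (1 / (ms * ns : ℝ)) * ∑ i ∈ range ms, ∑ j ∈ range ns, φw (X i ω) (Y j ω)
      - (1 / (ms * ns : ℝ)) * ∑ i ∈ range ms, ∑ j ∈ range ns, φl (X i ω) (Y j ω))
    (cov : (Ω → ℝ) → (Ω → ℝ) → ℝ)
    (hcov : ∀ f g, cov f g = (∫ ω, f ω * g ω ∂μ) - (∫ ω, f ω ∂μ) * ∫ ω, g ω ∂μ)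
    (Dk Ds : Ω → ℝ)
    (hDk : Dk = fun ω => (ΔUk ω - (τw - τl)) / Real.sqrt (variance ΔUk μ))
    (hDs : Ds = fun ω => (ΔUs ω - (τw - τl)) / Real.sqrt (variance ΔUs μ)) :
    cov ΔUk ΔUs = variance ΔUs μ ∧
      cov Dk Ds = Real.sqrt (variance ΔUs μ / variance ΔUk μ) := by
  obtain ⟨ω₀⟩ := nonempty_of_isProbabilityMeasure μ
  have : Nonempty α := ⟨X 0 ω₀⟩
  have : Nonempty β := ⟨Y 0 ω₀⟩
  have hXY := hindep.indepFun_prodMk_prodMk_of_sumElim (fun i => (hXid i).aemeasurable_fst)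
    (fun j => (hYid j).aemeasurable_fst)
  have hψ : Measurable (Function.uncurry fun x y => φw x y - φl x y) := hφw.sub hφl
  have hT := memLp_kernel hXY hXid hYid hψ (hL2w.sub hL2l)
  have hkey := covariance_rectMean_rectMean hT (covariance_kernel_eq_of_iff
    hindep.of_sumElim_left hindep.of_sumElim_right hXY hXid hYid hψ) hmk hnk hmks hnks
  have hUk : ΔUk = rectMean (fun i j ω => φw (X i ω) (Y j ω) - φl (X i ω) (Y j ω)) mk nk := by
    ext ω
    simp only [hΔUk, rectMean, sum_sub_distrib, mul_sub]
  have hUs : ΔUs = rectMean (fun i j ω => φw (X i ω) (Y j ω) - φl (X i ω) (Y j ω)) ms ns := by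
    ext ω
    simp only [hΔUs, rectMean, sum_sub_distrib, mul_sub]
  have hcov' : ∀ f g, MemLp f 2 μ → MemLp g 2 μ → cov f g = cov[f, g; μ] := fun f g hf hg => by
    rw [hcov, covariance_eq_sub hf hg]; rfl
  subst hUk hUs hDk hDs
  have hUk2 := memLp_rectMean hT mk nk
  have hUs2 := memLp_rectMean hT ms ns
  refine ⟨by rw [hcov' _ _ hUk2 hUs2, hkey], ?_⟩
  rw [hcov' _ _ (hUk2.sub_const_div _ _) (hUs2.sub_const_div _ _)]
  exact covariance_standardized_of_covariance_eq_variance hUk2 hUs2 hkey _ _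

/-- Sequential Net Benefit statistics satisfy the independent increment
property: with nested i.i.d. samples, `ΔU_k = U_{wk} − U_{lk}` satisfies
`Cov(ΔU_k, ΔU_s) = Var(ΔU_s)` for stages `k < s` (`m_k ≤ m_s`, `n_k ≤ n_s`), and the
standardized statistics `D_k = (ΔU_k − Δτ)/√Var(ΔU_k)` satisfy
`Cov(D_k, D_s) = √(Var(ΔU_s)/Var(ΔU_k))`. -/
theorem stmt_6 {Ω α β : Type*} [MeasurableSpace Ω] [MeasurableSpace α] [MeasurableSpace β]
    (μ : Measure Ω) [IsProbabilityMeasure μ]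
    (X : ℕ → Ω → α) (Y : ℕ → Ω → β)
    (hXmeas : ∀ i, Measurable (X i)) (hYmeas : ∀ j, Measurable (Y j))
    (hXid : ∀ i, IdentDistrib (X i) (X 0) μ μ)
    (hYid : ∀ j, IdentDistrib (Y j) (Y 0) μ μ)
    (hindep : iIndepFun
      (Sum.elim (fun i ω => Sum.inl (X i ω)) (fun j ω => Sum.inr (Y j ω)) : ℕ ⊕ ℕ → Ω → α ⊕ β) μ)
    (φw φl : α → β → ℝ)
    (hφw : Measurable (Function.uncurry φw)) (hφl : Measurable (Function.uncurry φl))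
    (hL2w : MemLp (fun ω => φw (X 0 ω) (Y 0 ω)) 2 μ)
    (hL2l : MemLp (fun ω => φl (X 0 ω) (Y 0 ω)) 2 μ)
    (τw τl : ℝ) (hτw : τw = ∫ ω, φw (X 0 ω) (Y 0 ω) ∂μ)
    (hτl : τl = ∫ ω, φl (X 0 ω) (Y 0 ω) ∂μ)
    (mk nk ms ns : ℕ) (hmk : 1 ≤ mk) (hnk : 1 ≤ nk) (hmks : mk ≤ ms) (hnks : nk ≤ ns)
    (ΔUk ΔUs : Ω → ℝ)
    (hΔUk : ΔUk = fun ω =>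
      (1 / (mk * nk : ℝ)) * ∑ i ∈ range mk, ∑ j ∈ range nk, φw (X i ω) (Y j ω)
      - (1 / (mk * nk : ℝ)) * ∑ i ∈ range mk, ∑ j ∈ range nk, φl (X i ω) (Y j ω))
    (hΔUs : ΔUs = fun ω =>
      (1 / (ms * ns : ℝ)) * ∑ i ∈ range ms, ∑ j ∈ range ns, φw (X i ω) (Y j ω)
      - (1 / (ms * ns : ℝ)) * ∑ i ∈ range ms, ∑ j ∈ range ns, φl (X i ω) (Y j ω))
    (hvk : 0 < variance ΔUk μ) (hvs : 0 < variance ΔUs μ)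
    (cov : (Ω → ℝ) → (Ω → ℝ) → ℝ)
    (hcov : ∀ f g, cov f g = (∫ ω, f ω * g ω ∂μ) - (∫ ω, f ω ∂μ) * ∫ ω, g ω ∂μ)
    (Dk Ds : Ω → ℝ)
    (hDk : Dk = fun ω => (ΔUk ω - (τw - τl)) / Real.sqrt (variance ΔUk μ))
    (hDs : Ds = fun ω => (ΔUs ω - (τw - τl)) / Real.sqrt (variance ΔUs μ)) :
    cov ΔUk ΔUs = variance ΔUs μ ∧
      cov Dk Ds = Real.sqrt (variance ΔUs μ / variance ΔUk μ) :=
  stmt_6_general μ X Y hXid hYid hindep φw φl hφw hφl hL2w hL2l τw τl mk nk ms ns hmk hnk hmks hnks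
    ΔUk ΔUs hΔUk hΔUs cov hcov Dk Ds hDk hDs
end

section
/- Cross-kernel covariance of nested sequential U-statistics: for two possibly different square-integrable kernels φ_u, φ_v and nested samples with m_k ≤ m_s and n_k ≤ n_s, Cov(U_{uk}, U_{vs}) = ((n_s−1)/(m_s n_s)) ξ^{uv}_{10} + ((m_s−1)/(m_s n_s)) ξ^{uv}_{01} + (1/(m_s n_s)) ξ^{uv}_{11}, i.e., the covariance depends only on the later-stage sample sizes (m_s, n_s). -/
/-!
Expanding both U-statistics, `Cov(U_{uk}, U_{vs})` is `1 / (m_k n_k m_s n_s)` times the sum over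
index quadruples `(i, j, i', j')` of `Cov(φ_u(X_i, Y_j), φ_v(X_{i'}, Y_{j'}))`. By independence
and identical distribution this term only depends on whether `i = i'` and `j = j'`: it is `ξ₁₁`,
`ξ₁₀`, `ξ₀₁` or `0`. Since the earlier sample is contained in the later one, every one of the
`m_k n_k` earlier pairs `(i, j)` meets itself once, `n_s - 1` later pairs sharing `i` and `m_s - 1`
later pairs sharing `j`, so the factor `m_k n_k` cancels.
-/

open MeasureTheory ProbabilityTheory Finset

theorem ProbabilityTheory.iIndepFun.identDistrib_pi {Ω Ω' κ : Type*} [MeasurableSpace Ω]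
    [MeasurableSpace Ω'] {μ : Measure Ω} {ν : Measure Ω'} [Fintype κ] {β : κ → Type*}
    [∀ k, MeasurableSpace (β k)] {f : ∀ k, Ω → β k} {g : ∀ k, Ω' → β k}
    (hf : iIndepFun f μ) (hg : iIndepFun g ν) (hfg : ∀ k, IdentDistrib (f k) (g k) μ ν) :
    IdentDistrib (fun ω k ↦ f k ω) (fun ω k ↦ g k ω) μ ν where
  aemeasurable_fst := aemeasurable_pi_lambda _ fun k ↦ (hfg k).aemeasurable_fst
  aemeasurable_snd := aemeasurable_pi_lambda _ fun k ↦ (hfg k).aemeasurable_snd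
  map_eq := by
    rw [hf.map_fun_eq_pi_map fun k ↦ (hfg k).aemeasurable_fst,
      hg.map_fun_eq_pi_map fun k ↦ (hfg k).aemeasurable_snd]
    simp_rw [fun k ↦ (hfg k).map_eq]

theorem ProbabilityTheory.IdentDistrib.covariance_comp_eq_s7 {Ω Ω' δ : Type*} [MeasurableSpace Ω]
    [MeasurableSpace Ω'] [MeasurableSpace δ] {μ : Measure Ω} {ν : Measure Ω'}
    {T : Ω → δ} {T' : Ω' → δ} (h : IdentDistrib T T' μ ν) {g₁ g₂ : δ → ℝ}
    (hg₁ : Measurable g₁) (hg₂ : Measurable g₂) :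
    cov[g₁ ∘ T, g₂ ∘ T; μ] = cov[g₁ ∘ T', g₂ ∘ T'; ν] := by
  rw [← covariance_map hg₁.aestronglyMeasurable hg₂.aestronglyMeasurable h.aemeasurable_fst,
    h.map_eq, covariance_map hg₁.aestronglyMeasurable hg₂.aestronglyMeasurable
      h.aemeasurable_snd]

theorem Finset.sum_ite_eq_const_of_mem {ι R : Type*} [DecidableEq ι] [Ring R] {s : Finset ι}
    {i : ι} (hi : i ∈ s) (x y : R) :
    ∑ j ∈ s, (if i = j then x else y) = x + (#s - 1 : R) * y := by
  rw [← add_sum_erase s _ hi, if_pos rfl,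
    sum_congr rfl fun j hj ↦ if_neg (ne_of_mem_erase hj).symm, sum_const,
    card_erase_of_mem hi, nsmul_eq_mul, Nat.cast_pred (card_pos.mpr ⟨i, hi⟩)]

theorem Finset.sum_product_ite_eq_of_mem {ι κ R : Type*} [DecidableEq ι] [DecidableEq κ] [Ring R]
    {s : Finset ι} {t : Finset κ} {p : ι × κ} (hp : p ∈ s ×ˢ t) (a b c : R) :
    ∑ q ∈ s ×ˢ t, (if p.1 = q.1 then (if p.2 = q.2 then c else a)
        else (if p.2 = q.2 then b else 0)) =
      c + (#t - 1 : R) * a + (#s - 1 : R) * b := by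
  rw [mem_product] at hp
  calc _ = ∑ i ∈ s, (if p.1 = i then c + (#t - 1 : R) * a else b) := by
        rw [sum_product]
        refine sum_congr rfl fun i _ ↦ ?_
        split_ifs
        · exact sum_ite_eq_const_of_mem hp.2 c a
        · simp [hp.2]
    _ = _ := sum_ite_eq_const_of_mem hp.1 _ _

theorem ProbabilityTheory.covariance_const_mul_sum_const_mul_sum {Ω ι κ : Type*}
    [MeasurableSpace Ω] {μ : Measure Ω} [IsFiniteMeasure μ] {s : Finset ι} {t : Finset κ}
    {f : ι → Ω → ℝ} {g : κ → Ω → ℝ} (hf : ∀ i ∈ s, MemLp (f i) 2 μ)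
    (hg : ∀ j ∈ t, MemLp (g j) 2 μ) (c d : ℝ) :
    cov[fun ω ↦ c * ∑ i ∈ s, f i ω, fun ω ↦ d * ∑ j ∈ t, g j ω; μ] =
      c * d * ∑ i ∈ s, ∑ j ∈ t, cov[f i, g j; μ] := by
  rw [covariance_const_mul_left, covariance_const_mul_right, covariance_fun_sum_fun_sum' hf hg,
    mul_assoc]

noncomputable def Sum.leftOrArbitrary {α β : Type*} [Nonempty α] : α ⊕ β → α :=
  Sum.elim id fun _ ↦ Classical.arbitrary α

noncomputable def Sum.rightOrArbitrary {α β : Type*} [Nonempty β] : α ⊕ β → β :=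
  Sum.elim (fun _ ↦ Classical.arbitrary β) id

theorem measurable_leftOrArbitrary {α β : Type*} [MeasurableSpace α] [MeasurableSpace β]
    [Nonempty α] : Measurable (Sum.leftOrArbitrary : α ⊕ β → α) :=
  measurable_id.sumElim measurable_const

theorem measurable_rightOrArbitrary {α β : Type*} [MeasurableSpace α] [MeasurableSpace β]
    [Nonempty β] : Measurable (Sum.rightOrArbitrary : α ⊕ β → β) :=
  measurable_const.sumElim measurable_id

section TwoSample

variable {Ω α β : Type*}

def sampleFamily (X : ℕ → Ω → α) (Y : ℕ → Ω → β) : ℕ ⊕ ℕ → Ω → α ⊕ β :=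
  Sum.elim (fun i ω ↦ .inl (X i ω)) (fun j ω ↦ .inr (Y j ω))

noncomputable def uStat (φ : α → β → ℝ) (X : ℕ → Ω → α) (Y : ℕ → Ω → β) (m n : ℕ) : Ω → ℝ :=
  fun ω ↦ (1 / (m * n : ℝ)) * ∑ i ∈ range m, ∑ j ∈ range n, φ (X i ω) (Y j ω)

theorem uStat_eq_sum_product (φ : α → β → ℝ) (X : ℕ → Ω → α) (Y : ℕ → Ω → β) (m n : ℕ) :
    uStat φ X Y m n =
      fun ω ↦ (1 / (m * n : ℝ)) * ∑ p ∈ range m ×ˢ range n, φ (X p.1 ω) (Y p.2 ω) := by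
  unfold uStat
  simp_rw [sum_product]

variable [MeasurableSpace Ω] [MeasurableSpace α] [MeasurableSpace β]
  {μ : Measure Ω} {X : ℕ → Ω → α} {Y : ℕ → Ω → β}

variable [Nonempty α] [Nonempty β]

theorem identDistrib_quadruple (hindep : iIndepFun (sampleFamily X Y) μ)
    (hXid : ∀ i, IdentDistrib (X i) (X 0) μ μ) (hYid : ∀ j, IdentDistrib (Y j) (Y 0) μ μ)
    {i i' j j' : ℕ} (hi : i ≠ i') (hj : j ≠ j') :
    IdentDistrib (fun ω ↦ (X i ω, X i' ω, Y j ω, Y j' ω))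
      (fun ω ↦ (X 0 ω, X 1 ω, Y 0 ω, Y 1 ω)) μ μ := by
  let e : Fin 4 → ℕ ⊕ ℕ := ![.inl i, .inl i', .inr j, .inr j']
  let e₀ : Fin 4 → ℕ ⊕ ℕ := ![.inl 0, .inl 1, .inr 0, .inr 1]
  have he : e.Injective := by
    intro a b; fin_cases a <;> fin_cases b <;> simp [e, hi, hj, hi.symm, hj.symm]
  have he₀ : e₀.Injective := by
    intro a b; fin_cases a <;> fin_cases b <;> simp [e₀]
  have hmarg : ∀ k, IdentDistrib (sampleFamily X Y (e k)) (sampleFamily X Y (e₀ k)) μ μ := by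
    intro k
    fin_cases k
    · exact (hXid i).comp measurable_inl
    · exact ((hXid i').trans (hXid 1).symm).comp measurable_inl
    · exact (hYid j).comp measurable_inr
    · exact ((hYid j').trans (hYid 1).symm).comp measurable_inr
  have hα := measurable_leftOrArbitrary (α := α) (β := β)
  have hβ := measurable_rightOrArbitrary (α := α) (β := β)
  exact ((hindep.precomp he).identDistrib_pi (hindep.precomp he₀) hmarg).comp
    ((hα.comp (measurable_pi_apply 0)).prodMk ((hα.comp (measurable_pi_apply 1)).prodMk
      ((hβ.comp (measurable_pi_apply 2)).prodMk (hβ.comp (measurable_pi_apply 3)))))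

theorem indepFun_pair_pair (hindep : iIndepFun (sampleFamily X Y) μ)
    (hX : ∀ i, AEMeasurable (X i) μ) (hY : ∀ j, AEMeasurable (Y j) μ)
    {i i' j j' : ℕ} (hi : i ≠ i') (hj : j ≠ j') :
    IndepFun (fun ω ↦ (X i ω, Y j ω)) (fun ω ↦ (X i' ω, Y j' ω)) μ := by
  have hα := measurable_leftOrArbitrary (α := α) (β := β)
  have hβ := measurable_rightOrArbitrary (α := α) (β := β)
  have hZ : ∀ k, AEMeasurable (sampleFamily X Y k) μ := by
    rintro (i | j)
    · exact measurable_inl.comp_aemeasurable (hX i)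
    · exact measurable_inr.comp_aemeasurable (hY j)
  exact (hindep.indepFun_prodMk_prodMk₀ hZ (.inl i) (.inr j) (.inl i') (.inr j')
    (by simpa using hi) (by simp) (by simp) (by simpa using hj)).comp
    (hα.prodMap hβ) (hα.prodMap hβ)

variable (hindep : iIndepFun (sampleFamily X Y) μ)
  (hXid : ∀ i, IdentDistrib (X i) (X 0) μ μ) (hYid : ∀ j, IdentDistrib (Y j) (Y 0) μ μ)
include hindep hXid hYid

theorem memLp_kernel_s7 {φ : α → β → ℝ} (hφ : Measurable (Function.uncurry φ))
    (hL2 : MemLp (fun ω ↦ φ (X 0 ω) (Y 0 ω)) 2 μ) (i j : ℕ) :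
    MemLp (fun ω ↦ φ (X i ω) (Y j ω)) 2 μ := by
  have hg : Measurable fun p : α × α × β × β ↦ φ p.1 p.2.2.1 := by fun_prop
  exact ((identDistrib_quadruple hindep hXid hYid i.ne_add_one j.ne_add_one).comp hg).memLp_iff.mpr
    hL2

theorem covariance_kernel_eq {φu φv : α → β → ℝ} (hφu : Measurable (Function.uncurry φu))
    (hφv : Measurable (Function.uncurry φv)) (hL2u : MemLp (fun ω ↦ φu (X 0 ω) (Y 0 ω)) 2 μ)
    (hL2v : MemLp (fun ω ↦ φv (X 0 ω) (Y 0 ω)) 2 μ) (i i' j j' : ℕ) :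
    cov[fun ω ↦ φu (X i ω) (Y j ω), fun ω ↦ φv (X i' ω) (Y j' ω); μ] =
      if i = i' then
        if j = j' then cov[fun ω ↦ φu (X 0 ω) (Y 0 ω), fun ω ↦ φv (X 0 ω) (Y 0 ω); μ]
        else cov[fun ω ↦ φu (X 0 ω) (Y 0 ω), fun ω ↦ φv (X 0 ω) (Y 1 ω); μ]
      else
        if j = j' then cov[fun ω ↦ φu (X 0 ω) (Y 0 ω), fun ω ↦ φv (X 1 ω) (Y 0 ω); μ]
        else 0 := by
  have hu : Measurable fun p : α × α × β × β ↦ φu p.1 p.2.2.1 := by fun_prop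
  -- Where indices coincide, pad with a fresh one to read the term off a quadruple of distinct
  -- indices.
  split_ifs with hi hj hj
  · subst hi hj
    exact (identDistrib_quadruple hindep hXid hYid i.ne_add_one j.ne_add_one).covariance_comp_eq_s7
      (g₂ := fun p ↦ φv p.1 p.2.2.1) hu (by fun_prop)
  · subst hi
    exact (identDistrib_quadruple hindep hXid hYid i.ne_add_one hj).covariance_comp_eq_s7
      (g₂ := fun p ↦ φv p.1 p.2.2.2) hu (by fun_prop)
  · subst hj
    exact (identDistrib_quadruple hindep hXid hYid hi j.ne_add_one).covariance_comp_eq_s7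
      (g₂ := fun p ↦ φv p.2.1 p.2.2.1) hu (by fun_prop)
  · exact ((indepFun_pair_pair hindep (fun i ↦ (hXid i).aemeasurable_fst)
      (fun j ↦ (hYid j).aemeasurable_fst) hi hj).comp hφu hφv).covariance_eq_zero
      (memLp_kernel_s7 hindep hXid hYid hφu hL2u i j) (memLp_kernel_s7 hindep hXid hYid hφv hL2v i' j')

theorem memLp_uStat {φ : α → β → ℝ} (hφ : Measurable (Function.uncurry φ))
    (hL2 : MemLp (fun ω ↦ φ (X 0 ω) (Y 0 ω)) 2 μ) (m n : ℕ) :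
    MemLp (uStat φ X Y m n) 2 μ := by
  rw [uStat_eq_sum_product]
  exact (memLp_finsetSum (range m ×ˢ range n) fun p _ ↦
    memLp_kernel_s7 hindep hXid hYid hφ hL2 p.1 p.2).const_mul _

theorem covariance_uStat {φu φv : α → β → ℝ} (hφu : Measurable (Function.uncurry φu))
    (hφv : Measurable (Function.uncurry φv)) (hL2u : MemLp (fun ω ↦ φu (X 0 ω) (Y 0 ω)) 2 μ)
    (hL2v : MemLp (fun ω ↦ φv (X 0 ω) (Y 0 ω)) 2 μ) {mk nk ms ns : ℕ} (hmk : 1 ≤ mk)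
    (hnk : 1 ≤ nk) (hmks : mk ≤ ms) (hnks : nk ≤ ns) :
    cov[uStat φu X Y mk nk, uStat φv X Y ms ns; μ] =
      ((ns - 1 : ℝ) / (ms * ns)) * cov[fun ω ↦ φu (X 0 ω) (Y 0 ω), fun ω ↦ φv (X 0 ω) (Y 1 ω); μ]
      + ((ms - 1 : ℝ) / (ms * ns)) * cov[fun ω ↦ φu (X 0 ω) (Y 0 ω), fun ω ↦ φv (X 1 ω) (Y 0 ω); μ]
      + (1 / (ms * ns : ℝ)) * cov[fun ω ↦ φu (X 0 ω) (Y 0 ω), fun ω ↦ φv (X 0 ω) (Y 0 ω); μ] := by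
  have := hindep.isProbabilityMeasure
  have hmem : range mk ×ˢ range nk ⊆ range ms ×ˢ range ns :=
    product_subset_product (range_subset_range.mpr hmks)
      (range_subset_range.mpr hnks)
  rw [uStat_eq_sum_product, uStat_eq_sum_product, covariance_const_mul_sum_const_mul_sum
      (fun p _ ↦ memLp_kernel_s7 hindep hXid hYid hφu hL2u p.1 p.2)
      (fun p _ ↦ memLp_kernel_s7 hindep hXid hYid hφv hL2v p.1 p.2),
    sum_congr rfl fun p hp ↦ (sum_congr rfl fun q _ ↦
      covariance_kernel_eq hindep hXid hYid hφu hφv hL2u hL2v p.1 q.1 p.2 q.2).trans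
      (sum_product_ite_eq_of_mem (hmem hp) _ _ _)]
  simp only [sum_const, card_product, card_range, nsmul_eq_mul, Nat.cast_mul]
  have : (mk : ℝ) ≠ 0 := by positivity
  have : (nk : ℝ) ≠ 0 := by positivity
  field_simp
  ring

end TwoSample

theorem stmt_7_general {Ω α β : Type*} [MeasurableSpace Ω] [MeasurableSpace α] [MeasurableSpace β]
    (μ : Measure Ω) [IsProbabilityMeasure μ]
    (X : ℕ → Ω → α) (Y : ℕ → Ω → β)
    (hXid : ∀ i, IdentDistrib (X i) (X 0) μ μ)
    (hYid : ∀ j, IdentDistrib (Y j) (Y 0) μ μ)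
    (hindep : iIndepFun (m := fun _ : ℕ ⊕ ℕ => (inferInstance : MeasurableSpace (α ⊕ β)))
      (Sum.elim (fun i ω => Sum.inl (X i ω)) (fun j ω => Sum.inr (Y j ω))) μ)
    (φu φv : α → β → ℝ)
    (hφu : Measurable (Function.uncurry φu)) (hφv : Measurable (Function.uncurry φv))
    (hL2u : MemLp (fun ω => φu (X 0 ω) (Y 0 ω)) 2 μ)
    (hL2v : MemLp (fun ω => φv (X 0 ω) (Y 0 ω)) 2 μ)
    (mk nk ms ns : ℕ) (hmk : 1 ≤ mk) (hnk : 1 ≤ nk)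
    (hmks : mk ≤ ms) (hnks : nk ≤ ns)
    (Uuk Uvs : Ω → ℝ)
    (hUuk : Uuk = fun ω =>
      (1 / (mk * nk : ℝ)) * ∑ i ∈ range mk, ∑ j ∈ range nk, φu (X i ω) (Y j ω))
    (hUvs : Uvs = fun ω =>
      (1 / (ms * ns : ℝ)) * ∑ i ∈ range ms, ∑ j ∈ range ns, φv (X i ω) (Y j ω))
    (cov : (Ω → ℝ) → (Ω → ℝ) → ℝ)
    (hcov : ∀ f g, cov f g = (∫ ω, f ω * g ω ∂μ) - (∫ ω, f ω ∂μ) * ∫ ω, g ω ∂μ)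
    (ξ10 ξ01 ξ11 : ℝ)
    (hξ10 : ξ10 = cov (fun ω => φu (X 0 ω) (Y 0 ω)) (fun ω => φv (X 0 ω) (Y 1 ω)))
    (hξ01 : ξ01 = cov (fun ω => φu (X 0 ω) (Y 0 ω)) (fun ω => φv (X 1 ω) (Y 0 ω)))
    (hξ11 : ξ11 = cov (fun ω => φu (X 0 ω) (Y 0 ω)) (fun ω => φv (X 0 ω) (Y 0 ω))) :
    cov Uuk Uvs = ((ns - 1 : ℝ) / (ms * ns)) * ξ10 + ((ms - 1 : ℝ) / (ms * ns)) * ξ01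
      + (1 / (ms * ns : ℝ)) * ξ11 := by
  obtain ⟨ω₀⟩ := nonempty_of_isProbabilityMeasure μ
  have : Nonempty α := ⟨X 0 ω₀⟩
  have : Nonempty β := ⟨Y 0 ω₀⟩
  replace hindep : iIndepFun (sampleFamily X Y) μ := hindep
  have hcov_eq : ∀ f g, MemLp f 2 μ → MemLp g 2 μ → cov f g = cov[f, g; μ] :=
    fun f g hf hg ↦ by rw [hcov, covariance_eq_sub hf hg]; rfl
  have hLv := memLp_kernel_s7 hindep hXid hYid hφv hL2v
  rw [hcov_eq Uuk Uvs (hUuk ▸ memLp_uStat hindep hXid hYid hφu hL2u mk nk)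
      (hUvs ▸ memLp_uStat hindep hXid hYid hφv hL2v ms ns), hUuk, hUvs,
    hξ10, hξ01, hξ11, hcov_eq _ _ hL2u (hLv 0 1), hcov_eq _ _ hL2u (hLv 1 0),
    hcov_eq _ _ hL2u hL2v]
  exact covariance_uStat hindep hXid hYid hφu hφv hL2u hL2v hmk hnk hmks hnks

/-- Cross-kernel covariance of nested sequential two-sample U-statistics:
for square-integrable kernels `φ_u, φ_v` and nested samples with `m_k ≤ m_s`,
`n_k ≤ n_s`, `Cov(U_{uk}, U_{vs}) = ((n_s−1)/(m_s n_s)) ξ^{uv}₁₀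
+ ((m_s−1)/(m_s n_s)) ξ^{uv}₀₁ + (1/(m_s n_s)) ξ^{uv}₁₁`. -/
theorem stmt_7 {Ω α β : Type*} [MeasurableSpace Ω] [MeasurableSpace α] [MeasurableSpace β]
    (μ : Measure Ω) [IsProbabilityMeasure μ]
    (X : ℕ → Ω → α) (Y : ℕ → Ω → β)
    (hXmeas : ∀ i, Measurable (X i)) (hYmeas : ∀ j, Measurable (Y j))
    (hXid : ∀ i, IdentDistrib (X i) (X 0) μ μ)
    (hYid : ∀ j, IdentDistrib (Y j) (Y 0) μ μ)
    (hindep : iIndepFun (m := fun _ : ℕ ⊕ ℕ => (inferInstance : MeasurableSpace (α ⊕ β)))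
      (Sum.elim (fun i ω => Sum.inl (X i ω)) (fun j ω => Sum.inr (Y j ω))) μ)
    (φu φv : α → β → ℝ)
    (hφu : Measurable (Function.uncurry φu)) (hφv : Measurable (Function.uncurry φv))
    (hL2u : MemLp (fun ω => φu (X 0 ω) (Y 0 ω)) 2 μ)
    (hL2v : MemLp (fun ω => φv (X 0 ω) (Y 0 ω)) 2 μ)
    (mk nk ms ns : ℕ) (hmk : 1 ≤ mk) (hnk : 1 ≤ nk)
    (hms : 2 ≤ ms) (hns : 2 ≤ ns) (hmks : mk ≤ ms) (hnks : nk ≤ ns)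
    (Uuk Uvs : Ω → ℝ)
    (hUuk : Uuk = fun ω =>
      (1 / (mk * nk : ℝ)) * ∑ i ∈ range mk, ∑ j ∈ range nk, φu (X i ω) (Y j ω))
    (hUvs : Uvs = fun ω =>
      (1 / (ms * ns : ℝ)) * ∑ i ∈ range ms, ∑ j ∈ range ns, φv (X i ω) (Y j ω))
    (cov : (Ω → ℝ) → (Ω → ℝ) → ℝ)
    (hcov : ∀ f g, cov f g = (∫ ω, f ω * g ω ∂μ) - (∫ ω, f ω ∂μ) * ∫ ω, g ω ∂μ)
    (ξ10 ξ01 ξ11 : ℝ)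
    (hξ10 : ξ10 = cov (fun ω => φu (X 0 ω) (Y 0 ω)) (fun ω => φv (X 0 ω) (Y 1 ω)))
    (hξ01 : ξ01 = cov (fun ω => φu (X 0 ω) (Y 0 ω)) (fun ω => φv (X 1 ω) (Y 0 ω)))
    (hξ11 : ξ11 = cov (fun ω => φu (X 0 ω) (Y 0 ω)) (fun ω => φv (X 0 ω) (Y 0 ω))) :
    cov Uuk Uvs = ((ns - 1 : ℝ) / (ms * ns)) * ξ10 + ((ms - 1 : ℝ) / (ms * ns)) * ξ01
      + (1 / (ms * ns : ℝ)) * ξ11 :=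
  stmt_7_general μ X Y hXid hYid hindep φu φv hφu hφv hL2u hL2v mk nk ms ns hmk hnk hmks hnks Uuk
    Uvs hUuk hUvs cov hcov ξ10 ξ01 ξ11 hξ10 hξ01 hξ11
end
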